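/- Let A = [[A_ff, A_fc],[A_cf, A_cc]] be an invertible matrix on F ⊕ C with A_ff invertible, let P = [[W],[I]] and R = [Z, I], set δ_P = A_ff·W + A_fc, δ_R = Z·A_ff + A_cf, K = R·A·P. Suppose P satisfies the weak approximation property with respect to AᵀA with constant C_P, set C_W = sqrt(C_P·(1 + ‖W‖²)/‖AᵀA‖), and assume C_W·‖δ_R‖ < 1 (so K is invertible). Then for every F×F matrix Δ_F, with δ_F = I − Δ_F·A_ff, δ̂_F = I − A_ff·Δ_F, G = δ_F + Δ_F·δ_P·K⁻¹·δ_R, and G_pre = δ̂_F + δ_P·K⁻¹·δ_R·Δ_F, one has ‖G‖ ≤ ‖δ_F‖ + (1 + ‖δ_F‖)·C_W·‖δ_R‖/(1 − C_W·‖δ_R‖) and ‖G_pre‖ ≤ ‖δ̂_F‖ + ‖Δ_F‖·‖A_ff‖·C_W·‖δ_R‖/(1 − C_W·‖δ_R‖). -/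

import Mathlib

/-!
Let `S = A_cc - A_cf A_ff⁻¹ A_fc` be the Schur complement and `N = A_ff⁻¹ δ_P = W + A_ff⁻¹ A_fc`.
Then `K = S + δ_R N`, so `δ_P K⁻¹ = A_ff X` with `X = M (1 + δ_R M)⁻¹` and `M = N S⁻¹`.
The WAP gives `‖M‖ ≤ C_W`: for `y = S⁻¹ x` the vector `v = (-A_ff⁻¹ A_fc y, y)` satisfies
`A v = (0, x)`, and `M x = W e_c - e_f` for the WAP error `e = v - P w_c`, so by Cauchy–Schwarz
`‖M x‖ ≤ √(1 + ‖W‖²) ‖e‖ ≤ C_W ‖x‖`. A Neumann series bounds `‖X‖ ≤ C_W / (1 - C_W ‖δ_R‖)`,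
and the theorem follows from `G = δ_F + (1 - δ_F) X δ_R` and `G_pre = δ̂_F + A_ff X δ_R Δ_F`.
-/

open Matrix
open scoped Matrix.Norms.L2Operator

/-- The Euclidean (ℓ²) norm of a finitely-supported real vector. -/
noncomputable def euclNorm {ι : Type*} [Fintype ι] (v : ι → ℝ) : ℝ :=
  ‖(WithLp.equiv 2 (ι → ℝ)).symm v‖

theorem NormedRing.norm_inverse_one_sub_le {R : Type*} [NormedRing R]
    [HasSummableGeomSeries R] (h1 : ‖(1 : R)‖ ≤ 1) {t : R} (ht : ‖t‖ < 1) :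
    ‖Ring.inverse (1 - t)‖ ≤ (1 - ‖t‖)⁻¹ := by
  rw [NormedRing.inverse_one_sub t ht]
  exact (tsum_geometric_le_of_norm_lt_one t ht).trans (by linarith)

namespace Matrix

variable {l m n p α : Type*} [Fintype l] [Fintype m] [Fintype n] [Fintype p]

theorem inv_add_mul_eq [DecidableEq m] [CommRing α] {S : Matrix m m α} (hS : IsUnit S)
    (D : Matrix m n α) (N : Matrix n m α) :
    (S + D * N)⁻¹ = S⁻¹ * (1 + D * (N * S⁻¹))⁻¹ := by
  rw [← Matrix.mul_inv_rev, Matrix.add_mul, Matrix.one_mul, Matrix.mul_assoc,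
    nonsing_inv_mul_cancel_right S N ((isUnit_iff_isUnit_det _).mp hS)]

variable [DecidableEq m] [DecidableEq n] [DecidableEq p]

theorem l2_opNorm_one_le : ‖(1 : Matrix n n ℝ)‖ ≤ 1 := by
  nontriviality Matrix n n ℝ
  exact CStarRing.norm_one.le

theorem l2_opNorm_mul_mul_le (A : Matrix l m ℝ) (B : Matrix m n ℝ) (C : Matrix n p ℝ) :
    ‖A * B * C‖ ≤ ‖A‖ * ‖B‖ * ‖C‖ :=
  (l2_opNorm_mul _ _).trans (by grw [l2_opNorm_mul])

theorem l2_opNorm_inv_one_add_le {B : Matrix n n ℝ} (hB : ‖B‖ < 1) :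
    ‖(1 + B)⁻¹‖ ≤ (1 - ‖B‖)⁻¹ := by
  have : CompleteSpace (Matrix n n ℝ) := FiniteDimensional.complete ℝ _
  simpa [nonsing_inv_eq_ringInverse, sub_eq_add_neg] using
    NormedRing.norm_inverse_one_sub_le l2_opNorm_one_le (t := -B) (by simpa using hB)

theorem l2_opNorm_mul_inv_one_add_mul_le {M : Matrix m n ℝ} {D : Matrix n m ℝ} {c : ℝ}
    (hM : ‖M‖ ≤ c) (hc : c * ‖D‖ < 1) : ‖M * (1 + D * M)⁻¹‖ ≤ c / (1 - c * ‖D‖) := by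
  have hDM : ‖D * M‖ ≤ c * ‖D‖ := by
    rw [mul_comm c]
    exact (l2_opNorm_mul D M).trans (by gcongr)
  have hc0 : 0 ≤ c := (norm_nonneg M).trans hM
  calc ‖M * (1 + D * M)⁻¹‖ ≤ ‖M‖ * ‖(1 + D * M)⁻¹‖ := l2_opNorm_mul _ _
    _ ≤ c * (1 - ‖D * M‖)⁻¹ := by
        gcongr
        exact l2_opNorm_inv_one_add_le (hDM.trans_lt hc)
    _ ≤ c * (1 - c * ‖D‖)⁻¹ := by gcongr
    _ = c / (1 - c * ‖D‖) := (div_eq_mul_inv _ _).symm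

end Matrix

section euclNorm

variable {ι κ : Type*} [Fintype ι] [Fintype κ]

theorem euclNorm_nonneg (v : ι → ℝ) : 0 ≤ euclNorm v := norm_nonneg _

theorem euclNorm_sub_le (x y : ι → ℝ) : euclNorm (x - y) ≤ euclNorm x + euclNorm y :=
  norm_sub_le (WithLp.toLp 2 x) (WithLp.toLp 2 y)

theorem euclNorm_sumElim (a : ι → ℝ) (b : κ → ℝ) :
    euclNorm (Sum.elim a b) = √(euclNorm a ^ 2 + euclNorm b ^ 2) := by
  simp only [euclNorm, EuclideanSpace.norm_eq, Fintype.sum_sum_type]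
  rw [Real.sq_sqrt (by positivity), Real.sq_sqrt (by positivity)]
  simp

theorem euclNorm_sumElim_zero_left (b : κ → ℝ) :
    euclNorm (Sum.elim (0 : ι → ℝ) b) = euclNorm b := by
  rw [euclNorm_sumElim, Real.sqrt_eq_iff_eq_sq (by positivity) (euclNorm_nonneg b)]
  simp [euclNorm]

variable [DecidableEq κ]

theorem euclNorm_mulVec_le (M : Matrix ι κ ℝ) (x : κ → ℝ) :
    euclNorm (M *ᵥ x) ≤ ‖M‖ * euclNorm x :=
  M.l2_opNorm_mulVec (WithLp.toLp 2 x)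

theorem Matrix.l2_opNorm_le_of_euclNorm_mulVec_le (M : Matrix ι κ ℝ) {c : ℝ} (hc : 0 ≤ c)
    (h : ∀ x : κ → ℝ, euclNorm (M *ᵥ x) ≤ c * euclNorm x) : ‖M‖ ≤ c :=
  ContinuousLinearMap.opNorm_le_bound _ hc fun x => h (WithLp.ofLp x)

theorem euclNorm_mulVec_sub_le (W : Matrix ι κ ℝ) (a : ι → ℝ) (b : κ → ℝ) :
    euclNorm (W *ᵥ b - a) ≤ √(1 + ‖W‖ ^ 2) * euclNorm (Sum.elim a b) := by
  rw [euclNorm_sumElim, ← Real.sqrt_mul (by positivity)]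
  have ha := euclNorm_nonneg a
  have hWb := mul_nonneg (norm_nonneg W) (euclNorm_nonneg b)
  calc euclNorm (W *ᵥ b - a) ≤ ‖W‖ * euclNorm b + euclNorm a :=
        (euclNorm_sub_le _ _).trans (add_le_add_left (euclNorm_mulVec_le W b) _)
    _ ≤ √((1 + ‖W‖ ^ 2) * (euclNorm a ^ 2 + euclNorm b ^ 2)) :=
        Real.le_sqrt_of_sq_le (by nlinarith [sq_nonneg (‖W‖ * euclNorm a - euclNorm b)])

end euclNorm

section Block

variable {F C α : Type*} [Fintype F] [Fintype C] [DecidableEq F] [CommRing α]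
  {Aff : Matrix F F α} (Afc : Matrix F C α) (Acf : Matrix C F α) (Acc : Matrix C C α)

theorem fromBlocks_mulVec_sumElim_schur (hAff : IsUnit Aff) (y : C → α) :
    fromBlocks Aff Afc Acf Acc *ᵥ Sum.elim (-((Aff⁻¹ * Afc) *ᵥ y)) y =
      Sum.elim (0 : F → α) ((Acc - Acf * Aff⁻¹ * Afc) *ᵥ y) := by
  simp only [fromBlocks_mulVec, Sum.elim_comp_inl, Sum.elim_comp_inr, mulVec_neg, mulVec_mulVec,
    Matrix.mul_assoc, mul_nonsing_inv_cancel_left Aff _ ((isUnit_iff_isUnit_det _).mp hAff),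
    sub_mulVec]
  rw [neg_add_cancel, neg_add_eq_sub]

variable [DecidableEq C]

-- Without the ascriptions on `1`, the products elaborate with `CStarMatrix` multiplication.
theorem fromCols_mul_fromBlocks_mul_fromRows (hAff : IsUnit Aff) (W : Matrix F C α)
    (Z : Matrix C F α) :
    fromCols Z (1 : Matrix C C α) * fromBlocks Aff Afc Acf Acc * fromRows W (1 : Matrix C C α) =
      (Acc - Acf * Aff⁻¹ * Afc) + (Z * Aff + Acf) * (W + Aff⁻¹ * Afc) := by
  rw [fromCols_mul_fromBlocks, fromCols_mul_fromRows]
  simp only [Matrix.one_mul, Matrix.mul_one, Matrix.add_mul, Matrix.mul_add, Matrix.mul_assoc,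
    mul_nonsing_inv_cancel_left Aff _ ((isUnit_iff_isUnit_det _).mp hAff)]
  abel

theorem mul_add_mul_inv_coarse_eq (hAff : IsUnit Aff) (hS : IsUnit (Acc - Acf * Aff⁻¹ * Afc))
    (W : Matrix F C α) (Z : Matrix C F α) :
    (Aff * W + Afc) * (fromCols Z (1 : Matrix C C α) * fromBlocks Aff Afc Acf Acc *
        fromRows W (1 : Matrix C C α))⁻¹ =
      Aff * ((W + Aff⁻¹ * Afc) * (Acc - Acf * Aff⁻¹ * Afc)⁻¹ *
        (1 + (Z * Aff + Acf) * ((W + Aff⁻¹ * Afc) * (Acc - Acf * Aff⁻¹ * Afc)⁻¹))⁻¹) := by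
  rw [fromCols_mul_fromBlocks_mul_fromRows _ _ _ hAff, inv_add_mul_eq hS]
  simp only [Matrix.mul_add, ← Matrix.mul_assoc,
    mul_nonsing_inv _ ((isUnit_iff_isUnit_det _).mp hAff), Matrix.one_mul]

end Block

/-- The paper's WAP with respect to `AᵀA` with constant `C_P` is the case `c = C_P / ‖AᵀA‖`. -/
def WeakApproximation {ι κ : Type*} [Fintype ι] [Fintype κ] (A : Matrix ι ι ℝ)
    (P : Matrix ι κ ℝ) (c : ℝ) : Prop :=
  ∀ v : ι → ℝ, ∃ wc : κ → ℝ, euclNorm (v - P *ᵥ wc) ^ 2 ≤ c * euclNorm (A *ᵥ v) ^ 2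

section WeakApproximation

variable {F C : Type*} [Fintype F] [Fintype C] [DecidableEq F] [DecidableEq C]
  {Aff : Matrix F F ℝ} {Afc : Matrix F C ℝ} {Acf : Matrix C F ℝ} {Acc : Matrix C C ℝ}
  {W : Matrix F C ℝ} {c : ℝ}

theorem euclNorm_mulVec_le_of_weakApproximation (hAff : IsUnit Aff)
    (hWAP : WeakApproximation (fromBlocks Aff Afc Acf Acc) (fromRows W 1) c) (y : C → ℝ) :
    euclNorm ((W + Aff⁻¹ * Afc) *ᵥ y) ≤
      √c * √(1 + ‖W‖ ^ 2) * euclNorm ((Acc - Acf * Aff⁻¹ * Afc) *ᵥ y) := by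
  set vf := -((Aff⁻¹ * Afc) *ᵥ y)
  obtain ⟨wc, hwc⟩ := hWAP (Sum.elim vf y)
  have herr : Sum.elim vf y - fromRows W 1 *ᵥ wc = Sum.elim (vf - W *ᵥ wc) (y - wc) := by
    ext (i | i) <;> simp [fromRows_mulVec]
  have hNy : (W + Aff⁻¹ * Afc) *ᵥ y = W *ᵥ (y - wc) - (vf - W *ᵥ wc) := by
    simp only [vf, add_mulVec, mulVec_sub]
    abel
  rw [fromBlocks_mulVec_sumElim_schur Afc Acf Acc hAff, herr, euclNorm_sumElim_zero_left] at hwc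
  have herr_le : euclNorm (Sum.elim (vf - W *ᵥ wc) (y - wc)) ≤
      √c * euclNorm ((Acc - Acf * Aff⁻¹ * Afc) *ᵥ y) := by
    rw [← Real.sqrt_sq (euclNorm_nonneg _), ← Real.sqrt_sq (euclNorm_nonneg (_ *ᵥ y)),
      ← Real.sqrt_mul' _ (sq_nonneg _)]
    exact Real.sqrt_le_sqrt hwc
  calc euclNorm ((W + Aff⁻¹ * Afc) *ᵥ y) = euclNorm (W *ᵥ (y - wc) - (vf - W *ᵥ wc)) := by
        rw [hNy]
    _ ≤ √(1 + ‖W‖ ^ 2) * euclNorm (Sum.elim (vf - W *ᵥ wc) (y - wc)) :=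
        euclNorm_mulVec_sub_le _ _ _
    _ ≤ √(1 + ‖W‖ ^ 2) * (√c * euclNorm ((Acc - Acf * Aff⁻¹ * Afc) *ᵥ y)) := by gcongr
    _ = _ := by ring

theorem l2_opNorm_mul_inv_schur_le_of_weakApproximation (hAff : IsUnit Aff)
    (hS : IsUnit (Acc - Acf * Aff⁻¹ * Afc))
    (hWAP : WeakApproximation (fromBlocks Aff Afc Acf Acc) (fromRows W 1) c) :
    ‖(W + Aff⁻¹ * Afc) * (Acc - Acf * Aff⁻¹ * Afc)⁻¹‖ ≤ √c * √(1 + ‖W‖ ^ 2) := by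
  refine l2_opNorm_le_of_euclNorm_mulVec_le _ (by positivity) fun x => ?_
  simpa [mulVec_mulVec, mul_nonsing_inv _ ((isUnit_iff_isUnit_det _).mp hS)] using
    euclNorm_mulVec_le_of_weakApproximation hAff hWAP ((Acc - Acf * Aff⁻¹ * Afc)⁻¹ *ᵥ x)

end WeakApproximation

/-- **Theorem 3.4.** If `P` satisfies the WAP with respect to `AᵀA` with constant `C_P` and
`C_W·‖δ_R‖ < 1`, then for any `Δ_F`,
`‖G‖ ≤ ‖δ_F‖ + (1 + ‖δ_F‖)·C_W‖δ_R‖/(1 − C_W‖δ_R‖)` and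
`‖G_pre‖ ≤ ‖δ̂_F‖ + ‖Δ_F‖·‖A_ff‖·C_W‖δ_R‖/(1 − C_W‖δ_R‖)`. -/
theorem wap_on_P_G_bounds
    {F C : Type*} [Fintype F] [Fintype C] [DecidableEq F] [DecidableEq C]
    (Aff : Matrix F F ℝ) (Afc : Matrix F C ℝ) (Acf : Matrix C F ℝ) (Acc : Matrix C C ℝ)
    (W : Matrix F C ℝ) (Z : Matrix C F ℝ)
    (A : Matrix (F ⊕ C) (F ⊕ C) ℝ) (hA : A = fromBlocks Aff Afc Acf Acc)
    (hAinv : IsUnit A) (hAff : IsUnit Aff)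
    (P : Matrix (F ⊕ C) C ℝ) (hP : P = fromRows W 1)
    (R : Matrix C (F ⊕ C) ℝ) (hR : R = fromCols Z 1)
    (K : Matrix C C ℝ) (hK : K = R * A * P)
    (δP : Matrix F C ℝ) (hδP : δP = Aff * W + Afc)
    (δR : Matrix C F ℝ) (hδR : δR = Z * Aff + Acf)
    (CP : ℝ)
    (hWAP : ∀ v : (F ⊕ C) → ℝ, ∃ wc : C → ℝ,
      euclNorm (v - P *ᵥ wc) ^ 2 ≤ (CP / ‖Aᵀ * A‖) * euclNorm (A *ᵥ v) ^ 2)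
    (CW : ℝ) (hCW : CW = Real.sqrt (CP * (1 + ‖W‖ ^ 2) / ‖Aᵀ * A‖))
    (hsmall : CW * ‖δR‖ < 1) :
    ∀ ΔF : Matrix F F ℝ, ∀ δF δFhat G Gpre : Matrix F F ℝ,
      δF = 1 - ΔF * Aff → δFhat = 1 - Aff * ΔF →
      G = δF + ΔF * δP * K⁻¹ * δR → Gpre = δFhat + δP * K⁻¹ * δR * ΔF →
      ‖G‖ ≤ ‖δF‖ + (1 + ‖δF‖) * (CW * ‖δR‖) / (1 - CW * ‖δR‖) ∧
      ‖Gpre‖ ≤ ‖δFhat‖ + ‖ΔF‖ * ‖Aff‖ * (CW * ‖δR‖) / (1 - CW * ‖δR‖) := by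
  intro ΔF δF δFhat G Gpre hδF hδFhat hG hGpre
  have hS : IsUnit (Acc - Acf * Aff⁻¹ * Afc) := by
    obtain ⟨_⟩ := hAff.nonempty_invertible
    simpa [invOf_eq_nonsing_inv] using isUnit_fromBlocks_iff_of_invertible₁₁.mp (hA ▸ hAinv)
  set M := (W + Aff⁻¹ * Afc) * (Acc - Acf * Aff⁻¹ * Afc)⁻¹
  have hM : ‖M‖ ≤ CW := by
    rw [hCW, mul_div_right_comm, Real.sqrt_mul' _ (by positivity)]
    refine l2_opNorm_mul_inv_schur_le_of_weakApproximation hAff hS ?_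
    rwa [← hA, ← hP]
  set X := M * (1 + δR * M)⁻¹
  have hX : ‖X‖ * ‖δR‖ ≤ CW * ‖δR‖ / (1 - CW * ‖δR‖) := by
    rw [mul_div_right_comm]
    gcongr
    exact l2_opNorm_mul_inv_one_add_mul_le hM hsmall
  have hδPK : δP * K⁻¹ = Aff * X := by
    subst hK hA hR hP hδP hδR
    exact mul_add_mul_inv_coarse_eq _ _ _ hAff hS W Z
  have hΔF : ΔF * Aff = 1 - δF := by rw [hδF, sub_sub_cancel]
  constructor
  · calc ‖G‖ = ‖δF + (1 - δF) * X * δR‖ := by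
          rw [hG, Matrix.mul_assoc ΔF, hδPK, ← Matrix.mul_assoc, hΔF]
      _ ≤ ‖δF‖ + (1 + ‖δF‖) * (‖X‖ * ‖δR‖) := by
          grw [norm_add_le, l2_opNorm_mul_mul_le, norm_sub_le, l2_opNorm_one_le, mul_assoc]
      _ ≤ ‖δF‖ + (1 + ‖δF‖) * (CW * ‖δR‖ / (1 - CW * ‖δR‖)) := by gcongr
      _ = _ := by ring
  · calc ‖Gpre‖ = ‖δFhat + Aff * X * (δR * ΔF)‖ := by
          rw [hGpre, hδPK, Matrix.mul_assoc _ δR]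
      _ ≤ ‖δFhat‖ + ‖Aff‖ * ‖X‖ * (‖δR‖ * ‖ΔF‖) := by
          grw [norm_add_le, l2_opNorm_mul_mul_le, l2_opNorm_mul δR]
      _ = ‖δFhat‖ + ‖ΔF‖ * ‖Aff‖ * (‖X‖ * ‖δR‖) := by ring
      _ ≤ ‖δFhat‖ + ‖ΔF‖ * ‖Aff‖ * (CW * ‖δR‖ / (1 - CW * ‖δR‖)) := by gcongr
      _ = _ := by ring
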